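/- arXiv:2506.08025 — 6 statements merged into one kernel-verified Lean document; each statement's English description precedes it below -/
import Mathlib

section
/- Let H ∈ (1/2, 1), q > 0, r > 0, b₁ ∈ ℝ and b₂ ≠ 0. The quadratic equation (1-H)·b₂·K² + b₁·K - H·b₂·q/r = 0 has exactly two real roots; exactly one of them, namely K̂ = -(b₁ + √(b₁² + 4H(1-H)·b₂²·q/r)) / (2·b₂·(1-H)), satisfies the stability condition b₁ + b₂ K < 0, while the other root K' satisfies b₁ + b₂ K' > 0. Hence a real number K solves the quadratic together with b₁ + b₂ K < 0 if and only if K = K̂. -/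
/-!
The discriminant `b₁² + 4H(1-H)b₂²q/r` is positive, so the roots are `(-b₁ ± s)/(2b₂(1-H))`
with `s` its square root. At these roots the closed-loop drift `b₁ + b₂K` equals
`((1-2H)b₁ ± s)/(2(1-H))`, and since `|1-2H| < 1` the root `s` dominates `|(1-2H)b₁|`:
the drift is negative for `-s` and positive for `+s`.
-/

open Real

lemma sq_mul_lt_sq_add_of_abs_le_one {t b e : ℝ} (ht : |t| ≤ 1) (he : 0 < e) :
    (t * b) ^ 2 < b ^ 2 + e := by
  have ht2 : t ^ 2 ≤ 1 := (sq_le_one_iff_abs_le_one t).2 ht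
  nlinarith [sq_nonneg b]

section OptimalityQuadratic

variable {H q r b₁ b₂ : ℝ}

lemma optimality_quadratic_eq_zero_iff (hH : H ≠ 1) (hb₂ : b₂ ≠ 0)
    (hD : 0 ≤ b₁ ^ 2 + 4 * H * (1 - H) * b₂ ^ 2 * q / r) (K : ℝ) :
    (1 - H) * b₂ * K ^ 2 + b₁ * K - H * b₂ * q / r = 0 ↔
      K = (-b₁ + √(b₁ ^ 2 + 4 * H * (1 - H) * b₂ ^ 2 * q / r)) / (2 * b₂ * (1 - H)) ∨
      K = (-b₁ - √(b₁ ^ 2 + 4 * H * (1 - H) * b₂ ^ 2 * q / r)) / (2 * b₂ * (1 - H)) := by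
  have ha : (1 - H) * b₂ ≠ 0 := mul_ne_zero (sub_ne_zero.2 hH.symm) hb₂
  have hdisc : discrim ((1 - H) * b₂) b₁ (-(H * b₂ * q / r)) =
      √(b₁ ^ 2 + 4 * H * (1 - H) * b₂ ^ 2 * q / r) *
        √(b₁ ^ 2 + 4 * H * (1 - H) * b₂ ^ 2 * q / r) := by
    rw [mul_self_sqrt hD, discrim]; ring
  convert quadratic_eq_zero_iff ha hdisc K using 2 <;> ring_nf

lemma add_mul_optimality_root (hH : H ≠ 1) (hb₂ : b₂ ≠ 0) (u : ℝ) :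
    b₁ + b₂ * ((-b₁ + u) / (2 * b₂ * (1 - H))) =
      ((1 - 2 * H) * b₁ + u) / (2 * (1 - H)) := by
  have h1H : 1 - H ≠ 0 := sub_ne_zero.2 hH.symm
  field_simp
  ring

end OptimalityQuadratic

/-- The first-order optimality quadratic `(1-H)·b₂·K² + b₁·K - H·b₂·q/r = 0` of the
Rosenblatt ergodic control problem has exactly two real roots; exactly one of them,
namely `Khat`, is stabilizing (`b₁ + b₂K < 0`), the other is anti-stable, and a real
number solves the quadratic together with the stability condition iff it equals `Khat`. -/
theorem stmt_1 (H q r b₁ b₂ : ℝ)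
    (hH : 1/2 < H) (hH1 : H < 1) (hq : 0 < q) (hr : 0 < r) (hb₂ : b₂ ≠ 0) :
    let f : ℝ → ℝ := fun K => (1-H) * b₂ * K^2 + b₁ * K - H * b₂ * q / r;
    let Khat : ℝ := -(b₁ + Real.sqrt (b₁^2 + 4*H*(1-H) * b₂^2 * q / r)) / (2 * b₂ * (1-H));
    f Khat = 0 ∧ b₁ + b₂ * Khat < 0 ∧
    (∃ K' : ℝ, K' ≠ Khat ∧ f K' = 0 ∧ b₁ + b₂ * K' > 0 ∧
      (∀ K : ℝ, f K = 0 → K = Khat ∨ K = K')) ∧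
    (∀ K : ℝ, (f K = 0 ∧ b₁ + b₂ * K < 0) ↔ K = Khat) := by
  intro f Khat
  have hH1' : H ≠ 1 := hH1.ne
  have he : 0 < 4 * H * (1 - H) * b₂ ^ 2 * q / r := by
    have : 0 < 1 - H := by linarith
    have : 0 < H := by linarith
    positivity
  have hsq : ((1 - 2 * H) * b₁) ^ 2 < b₁ ^ 2 + 4 * H * (1 - H) * b₂ ^ 2 * q / r :=
    sq_mul_lt_sq_add_of_abs_le_one (abs_le.2 ⟨by linarith, by linarith⟩) he
  have hroots := optimality_quadratic_eq_zero_iff (q := q) (r := r) (b₁ := b₁)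
    hH1' hb₂ (by positivity)
  set s := √(b₁ ^ 2 + 4 * H * (1 - H) * b₂ ^ 2 * q / r)
  set K' := (-b₁ + s) / (2 * b₂ * (1 - H))
  have hKhat : Khat = (-b₁ - s) / (2 * b₂ * (1 - H)) := by
    show -(b₁ + s) / _ = _
    rw [neg_add']
  have hstab : b₁ + b₂ * Khat < 0 := by
    rw [hKhat, sub_eq_add_neg, add_mul_optimality_root hH1' hb₂]
    exact div_neg_of_neg_of_pos (by linarith [lt_sqrt_of_sq_lt hsq]) (by linarith)
  have hanti : 0 < b₁ + b₂ * K' := by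
    rw [add_mul_optimality_root hH1' hb₂]
    exact div_pos (by linarith [neg_sqrt_lt_of_sq_lt hsq]) (by linarith)
  have hroot_of : ∀ K, f K = 0 → K = Khat ∨ K = K' := fun K hK =>
    (hKhat ▸ (hroots K).1 hK).symm
  refine ⟨(hroots Khat).2 (Or.inr hKhat), hstab,
    ⟨K', fun h => by linarith [h ▸ hanti], (hroots K').2 (Or.inl rfl), hanti, hroot_of⟩,
    fun K => ⟨fun ⟨hK, hKs⟩ => (hroot_of K hK).resolve_right ?_, ?_⟩⟩
  · rintro rfl; linarith
  · rintro rfl; exact ⟨(hroots Khat).2 (Or.inr hKhat), hstab⟩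
end

section
/- Let b̄₀ ∈ ℝ, q̄ > 0, r̄ > 0, and let c = b₁ + b̄₁ < 0 and d = b₂ + b̄₂ ≠ 0. Define M(K̄) = b̄₀²·(q̄ + r̄·K̄²) / (c + d·K̄)² on the stabilizing set {K̄ ∈ ℝ : c + d·K̄ < 0}. Then K̄* = d·q̄/(r̄·c) (i.e. K̄* = (b₂ + b̄₂)·q̄ / (r̄·(b₁ + b̄₁))) satisfies c + d·K̄* < 0 and is a global minimizer of M over the stabilizing set, with minimal value M(K̄*) = b̄₀²·q̄·r̄ / (c²·r̄ + d²·q̄). -/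
/-!
The two-term Lagrange identity
`(q + r K²)(c² r + d² q) = q r (c + d K)² + (d q - c r K)²`
is Cauchy–Schwarz for `c · 1 + d · K` against the weights `q, r`. Hence
`M(K) ≥ b̄₀² q r / (c² r + d² q)` whenever `c + d K ≠ 0`, with equality exactly where
`d q = c r K`, i.e. at `K̄*`.
-/

section MeanCost

variable {𝕜 : Type*} [Field 𝕜]

def meanCost (b₀ q r c d K : 𝕜) : 𝕜 := b₀ ^ 2 * (q + r * K ^ 2) / (c + d * K) ^ 2

def optimalGain (q r c d : 𝕜) : 𝕜 := d * q / (r * c)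

theorem add_mul_sq_mul_eq (q r c d K : 𝕜) :
    (q + r * K ^ 2) * (c ^ 2 * r + d ^ 2 * q) = q * r * (c + d * K) ^ 2 + (d * q - c * r * K) ^ 2 := by
  ring

variable {q r c d : 𝕜}

theorem add_mul_optimalGain (hr : r ≠ 0) (hc : c ≠ 0) :
    c + d * optimalGain q r c d = (c ^ 2 * r + d ^ 2 * q) / (r * c) := by
  unfold optimalGain
  field_simp

theorem meanCost_optimalGain (b₀ : 𝕜) (hr : r ≠ 0) (hc : c ≠ 0) :
    meanCost b₀ q r c d (optimalGain q r c d) = b₀ ^ 2 * q * r / (c ^ 2 * r + d ^ 2 * q) := by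
  have hnum : q + r * optimalGain q r c d ^ 2 = q * (c ^ 2 * r + d ^ 2 * q) / (r * c ^ 2) := by
    unfold optimalGain
    field_simp
  rw [meanCost, add_mul_optimalGain hr hc, hnum]
  rcases eq_or_ne (c ^ 2 * r + d ^ 2 * q) 0 with hS | hS
  · simp [hS]
  · field_simp

end MeanCost

section Ordered

variable {𝕜 : Type*} [Field 𝕜] [LinearOrder 𝕜] [IsStrictOrderedRing 𝕜] {q r c d : 𝕜}

theorem add_mul_optimalGain_neg (hS : 0 < c ^ 2 * r + d ^ 2 * q) (hr : 0 < r) (hc : c < 0) :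
    c + d * optimalGain q r c d < 0 := by
  rw [add_mul_optimalGain hr.ne' hc.ne]
  exact div_neg_of_pos_of_neg hS (mul_neg_of_pos_of_neg hr hc)

theorem div_le_meanCost (b₀ : 𝕜) {K : 𝕜} (hS : 0 < c ^ 2 * r + d ^ 2 * q) (hK : c + d * K ≠ 0) :
    b₀ ^ 2 * q * r / (c ^ 2 * r + d ^ 2 * q) ≤ meanCost b₀ q r c d K := by
  unfold meanCost
  rw [div_le_div_iff₀ hS (pow_two_pos_of_ne_zero hK)]
  calc b₀ ^ 2 * q * r * (c + d * K) ^ 2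
      ≤ b₀ ^ 2 * (q * r * (c + d * K) ^ 2 + (d * q - c * r * K) ^ 2) := by
        linarith [mul_nonneg (sq_nonneg b₀) (sq_nonneg (d * q - c * r * K))]
    _ = b₀ ^ 2 * (q + r * K ^ 2) * (c ^ 2 * r + d ^ 2 * q) := by
        rw [mul_assoc (b₀ ^ 2), add_mul_sq_mul_eq]

end Ordered

theorem stmt_6_general (b₀' q' r' b₁ b₁' b₂ b₂' : ℝ)
    (hq : 0 < q') (hr : 0 < r')
    (hc : b₁ + b₁' < 0) :
    let c : ℝ := b₁ + b₁';
    let d : ℝ := b₂ + b₂';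
    let M : ℝ → ℝ := fun K => b₀'^2 * (q' + r' * K^2) / (c + d * K)^2;
    let Kstar : ℝ := d * q' / (r' * c);
    c + d * Kstar < 0 ∧
    (∀ K : ℝ, c + d * K < 0 → M Kstar ≤ M K) ∧
    M Kstar = b₀'^2 * q' * r' / (c^2 * r' + d^2 * q') := by
  intro c d M Kstar
  have hS : 0 < c ^ 2 * r' + d ^ 2 * q' :=
    add_pos_of_pos_of_nonneg (mul_pos (pow_two_pos_of_ne_zero hc.ne) hr)
      (mul_nonneg (sq_nonneg d) hq.le)
  have hM : M Kstar = b₀' ^ 2 * q' * r' / (c ^ 2 * r' + d ^ 2 * q') :=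
    meanCost_optimalGain b₀' hr.ne' hc.ne
  exact ⟨add_mul_optimalGain_neg hS hr hc,
    fun K hK => hM.trans_le (div_le_meanCost b₀' hS hK.ne), hM⟩

/-- The mean part of the variance-aware ergodic control problem: with `c = b₁ + b̄₁ < 0`
and `d = b₂ + b̄₂ ≠ 0`, the gain `K̄* = d·q̄/(r̄·c)` is stabilizing and globally minimizes
`M(K̄) = b̄₀²·(q̄ + r̄·K̄²)/(c + d·K̄)²` over the stabilizing set, with minimal value
`b̄₀²·q̄·r̄/(c²·r̄ + d²·q̄)`. -/
theorem stmt_6 (b₀' q' r' b₁ b₁' b₂ b₂' : ℝ)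
    (hq : 0 < q') (hr : 0 < r')
    (hc : b₁ + b₁' < 0) (hd : b₂ + b₂' ≠ 0) :
    let c : ℝ := b₁ + b₁';
    let d : ℝ := b₂ + b₂';
    let M : ℝ → ℝ := fun K => b₀'^2 * (q' + r' * K^2) / (c + d * K)^2;
    let Kstar : ℝ := d * q' / (r' * c);
    c + d * Kstar < 0 ∧
    (∀ K : ℝ, c + d * K < 0 → M Kstar ≤ M K) ∧
    M Kstar = b₀'^2 * q' * r' / (c^2 * r' + d^2 * q') :=
  stmt_6_general b₀' q' r' b₁ b₁' b₂ b₂' hq hr hc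
end

section
/- Let I be a finite index set, H ∈ (1/2, 1), b₁ ∈ ℝ, and for each i ∈ I let b_{2i} ≠ 0, q_i > 0 and r_i > 0. Suppose (K_i)_{i∈I} are real numbers such that b₁ + Σ_{j∈I} b_{2j} K_j < 0 and, for every i ∈ I, K_i = -(a_i + √(a_i² + 4H(1-H)·b_{2i}²·q_i/r_i)) / (2·b_{2i}·(1-H)), where a_i = b₁ + Σ_{j∈I, j≠i} b_{2j} K_j. Then for every i ∈ I, K_i is a global minimizer of the function K ↦ Γ(2H+1)·(q_i + r_i K²) / (2·(-(a_i + b_{2i} K))^{2H}) over {K ∈ ℝ : a_i + b_{2i} K < 0}; that is, (K_i)_{i∈I} is a Nash equilibrium in stationary linear state-feedback strategies. -/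
/-!
In the coordinate `x = -(a + b K) > 0` agent `i`'s cost is a positive multiple of
`(q b² + r (a + x)²) / x ^ (2H)`, and the fixed-point formula for `K i` is the positive root `x₀`
of its first-order condition. Weighted AM-GM bounds `x ^ (2H) x₀ ^ (2 - 2H)` by the quadratic
`(2H - 1) x² + (2 - 2H) x₀ x`, and this quadratic, scaled to agree with the numerator at `x₀`, is
tangent to it there with a smaller leading coefficient, hence lies below it everywhere.
-/

open Finset Real

theorem rpow_mul_rpow_two_sub_le {p x y : ℝ} (hp₁ : 1 ≤ p) (hp₂ : p ≤ 2) (hx : 0 ≤ x)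
    (hy : 0 ≤ y) : x ^ p * y ^ (2 - p) ≤ (p - 1) * x ^ 2 + (2 - p) * (y * x) := by
  have amgm := geom_mean_le_arith_mean2_weighted (p₁ := x ^ 2) (p₂ := y * x)
    (sub_nonneg.2 hp₁) (sub_nonneg.2 hp₂) (by positivity) (by positivity) (by ring)
  calc x ^ p * y ^ (2 - p) = (x ^ 2) ^ (p - 1) * (y * x) ^ (2 - p) := by
        rw [← rpow_natCast, ← rpow_mul hx, mul_rpow hy hx, mul_left_comm, ← rpow_add' hx]
        · ring_nf
        · ring_nf; linarith
    _ ≤ _ := amgm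

section QuadraticOverPower

variable {H c r a x₀ x : ℝ}

theorem quadratic_mul_rpow_le_of_critical (hH : 1 / 2 ≤ H) (hH1 : H ≤ 1)
    (hN₀ : 0 ≤ c + r * (a + x₀) ^ 2) (hx₀ : 0 < x₀) (hx : 0 ≤ x)
    (hcrit : r * x₀ * (a + x₀) = H * (c + r * (a + x₀) ^ 2))
    (hlead : (2 * H - 1) * (c + r * (a + x₀) ^ 2) ≤ r * x₀ ^ 2) :
    (c + r * (a + x₀) ^ 2) * x ^ (2 * H) ≤ (c + r * (a + x) ^ 2) * x₀ ^ (2 * H) := by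
  set N₀ := c + r * (a + x₀) ^ 2
  have amgm := rpow_mul_rpow_two_sub_le (p := 2 * H) (by linarith) (by linarith) hx hx₀.le
  have tangent : N₀ * ((2 * H - 1) * x ^ 2 + (2 - 2 * H) * (x₀ * x)) ≤
      (c + r * (a + x) ^ 2) * x₀ ^ 2 := by
    have hsq : 0 ≤ (r * x₀ ^ 2 - (2 * H - 1) * N₀) * (x - x₀) ^ 2 :=
      mul_nonneg (by linarith) (sq_nonneg _)
    linear_combination hsq - 2 * x₀ * (x - x₀) * hcrit
  have hsplit : x₀ ^ 2 = x₀ ^ (2 * H) * x₀ ^ (2 - 2 * H) := by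
    rw [← rpow_add hx₀]; norm_num
  refine le_of_mul_le_mul_right ?_ (rpow_pos_of_pos hx₀ (2 - 2 * H))
  calc N₀ * x ^ (2 * H) * x₀ ^ (2 - 2 * H)
      ≤ N₀ * ((2 * H - 1) * x ^ 2 + (2 - 2 * H) * (x₀ * x)) := by
        rw [mul_assoc]; exact mul_le_mul_of_nonneg_left amgm hN₀
    _ ≤ (c + r * (a + x) ^ 2) * x₀ ^ 2 := tangent
    _ = _ := by rw [hsplit, mul_assoc]

end QuadraticOverPower

noncomputable def bestResponse (H a b q r : ℝ) : ℝ :=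
  -(a + √(a ^ 2 + 4 * H * (1 - H) * b ^ 2 * q / r)) / (2 * b * (1 - H))

noncomputable def ergodicCost (H a b q r K : ℝ) : ℝ :=
  Gamma (2 * H + 1) * (q + r * K ^ 2) / (2 * (-(a + b * K)) ^ (2 * H))

section BestResponse

variable {H a b q r : ℝ}

theorem ergodicCost_le_ergodicCost_iff (hH : 0 ≤ H) {K₀ K : ℝ} (hK₀ : a + b * K₀ < 0)
    (hK : a + b * K < 0) :
    ergodicCost H a b q r K₀ ≤ ergodicCost H a b q r K ↔
      (q + r * K₀ ^ 2) * (-(a + b * K)) ^ (2 * H) ≤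
        (q + r * K ^ 2) * (-(a + b * K₀)) ^ (2 * H) := by
  have hΓ : 0 < 2 * Gamma (2 * H + 1) :=
    mul_pos two_pos (Gamma_pos_of_pos (by linarith))
  have h₀ : 0 < (-(a + b * K₀)) ^ (2 * H) := rpow_pos_of_pos (by linarith) _
  have h : 0 < (-(a + b * K)) ^ (2 * H) := rpow_pos_of_pos (by linarith) _
  have regroup : ∀ u v, Gamma (2 * H + 1) * u * (2 * v) = 2 * Gamma (2 * H + 1) * (u * v) :=
    fun u v ↦ by ring
  unfold ergodicCost
  rw [div_le_div_iff₀ (by positivity) (by positivity), regroup, regroup,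
    mul_le_mul_iff_of_pos_left hΓ]

theorem neg_add_mul_bestResponse (hH1 : H ≠ 1) (hb : b ≠ 0) :
    2 * (1 - H) * -(a + b * bestResponse H a b q r) =
      √(a ^ 2 + 4 * H * (1 - H) * b ^ 2 * q / r) + (2 * H - 1) * a := by
  have : 1 - H ≠ 0 := sub_ne_zero.2 (Ne.symm hH1)
  unfold bestResponse
  field_simp
  ring

theorem ergodicCost_bestResponse_le (hH : 1 / 2 ≤ H) (hH1 : H < 1) (hb : b ≠ 0) (hq : 0 < q)
    (hr : 0 < r) {K : ℝ} (hK : a + b * K < 0) :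
    ergodicCost H a b q r (bestResponse H a b q r) ≤ ergodicCost H a b q r K := by
  set s := √(a ^ 2 + 4 * H * (1 - H) * b ^ 2 * q / r)
  set x₀ := -(a + b * bestResponse H a b q r)
  have hx₀ : 2 * (1 - H) * x₀ = s + (2 * H - 1) * a := neg_add_mul_bestResponse hH1.ne hb
  have hs : r * s ^ 2 = r * a ^ 2 + 4 * H * (1 - H) * b ^ 2 * q := by
    rw [sq_sqrt (by positivity)]; field_simp
  have has : |a| < s := by
    rw [← sqrt_sq_eq_abs]
    exact sqrt_lt_sqrt (sq_nonneg a) (lt_add_of_pos_right _ (by positivity))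
  obtain ⟨has₁, has₂⟩ := abs_lt.1 has
  have hx₀_pos : 0 < x₀ := by nlinarith
  have hcrit : r * x₀ * (a + x₀) = H * (q * b ^ 2 + r * (a + x₀) ^ 2) := by
    refine mul_left_cancel₀ (mul_pos four_pos (sub_pos.2 hH1)).ne' ?_
    linear_combination hs + r * (2 * (1 - H) * x₀ + s - (2 * H - 1) * a) * hx₀
  have hlead : (2 * H - 1) * (q * b ^ 2 + r * (a + x₀) ^ 2) ≤ r * x₀ ^ 2 := by
    have hgap : (2 * H - 1) * a ≤ (1 - H) * x₀ := by
      nlinarith [mul_nonneg (by linarith : 0 ≤ 2 * H - 1) (sub_nonneg.2 (le_abs_self a)),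
        mul_nonneg (by linarith : 0 ≤ 2 - 2 * H) (abs_nonneg a)]
    have hscaled : H * ((2 * H - 1) * (q * b ^ 2 + r * (a + x₀) ^ 2)) ≤ H * (r * x₀ ^ 2) := by
      nlinarith [mul_nonneg (mul_nonneg hr.le hx₀_pos.le) (sub_nonneg.2 hgap)]
    exact le_of_mul_le_mul_left hscaled (by linarith)
  have key := quadratic_mul_rpow_le_of_critical (x := -(a + b * K)) hH hH1.le (by positivity)
    hx₀_pos (by linarith) hcrit hlead
  have hN : ∀ K', q * b ^ 2 + r * (a + -(a + b * K')) ^ 2 = b ^ 2 * (q + r * K' ^ 2) := by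
    intro K'; ring
  rw [hN, hN, mul_assoc, mul_assoc] at key
  rw [ergodicCost_le_ergodicCost_iff (by linarith) (by linarith) hK]
  exact le_of_mul_le_mul_left key (by positivity)

end BestResponse

theorem stmt_9_general {I : Type*} [Fintype I] [DecidableEq I]
    (H b₁ : ℝ) (b₂ q r K : I → ℝ)
    (hH : 1/2 < H) (hH1 : H < 1)
    (hb₂ : ∀ i, b₂ i ≠ 0) (hq : ∀ i, 0 < q i) (hr : ∀ i, 0 < r i)
    (hfix : ∀ i, K i =
      -((b₁ + ∑ j ∈ univ.erase i, b₂ j * K j) +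
          Real.sqrt ((b₁ + ∑ j ∈ univ.erase i, b₂ j * K j)^2 +
            4*H*(1-H) * (b₂ i)^2 * q i / r i)) / (2 * b₂ i * (1-H))) :
    ∀ i, ∀ K' : ℝ,
      (b₁ + ∑ j ∈ univ.erase i, b₂ j * K j) + b₂ i * K' < 0 →
      Real.Gamma (2*H + 1) * (q i + r i * (K i)^2) /
          (2 * (-((b₁ + ∑ j ∈ univ.erase i, b₂ j * K j) + b₂ i * K i)) ^ (2*H)) ≤
        Real.Gamma (2*H + 1) * (q i + r i * K'^2) /
          (2 * (-((b₁ + ∑ j ∈ univ.erase i, b₂ j * K j) + b₂ i * K')) ^ (2*H)) := by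
  intro i K' hK'
  rw [hfix i]
  exact ergodicCost_bestResponse_le hH.le hH1 (hb₂ i) (hq i) (hr i) hK'

/-- Nash equilibrium of the non-zero-sum ergodic game driven by a Rosenblatt process:
if the gains `K i` satisfy the stated fixed-point system and the closed loop is stable,
then each `K i` globally minimizes agent `i`'s ergodic cost
`Γ(2H+1)·(qᵢ + rᵢK²)/(2(-(aᵢ + b₂ᵢK))^{2H})` over `{K : aᵢ + b₂ᵢK < 0}`, where
`aᵢ = b₁ + Σ_{j≠i} b₂ⱼKⱼ`; i.e. `(K i)` is a Nash equilibrium in stationary linear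
state-feedback strategies. -/
theorem stmt_9 {I : Type*} [Fintype I] [DecidableEq I]
    (H b₁ : ℝ) (b₂ q r K : I → ℝ)
    (hH : 1/2 < H) (hH1 : H < 1)
    (hb₂ : ∀ i, b₂ i ≠ 0) (hq : ∀ i, 0 < q i) (hr : ∀ i, 0 < r i)
    (hstab : b₁ + ∑ j, b₂ j * K j < 0)
    (hfix : ∀ i, K i =
      -((b₁ + ∑ j ∈ univ.erase i, b₂ j * K j) +
          Real.sqrt ((b₁ + ∑ j ∈ univ.erase i, b₂ j * K j)^2 +
            4*H*(1-H) * (b₂ i)^2 * q i / r i)) / (2 * b₂ i * (1-H))) :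
    ∀ i, ∀ K' : ℝ,
      (b₁ + ∑ j ∈ univ.erase i, b₂ j * K j) + b₂ i * K' < 0 →
      Real.Gamma (2*H + 1) * (q i + r i * (K i)^2) /
          (2 * (-((b₁ + ∑ j ∈ univ.erase i, b₂ j * K j) + b₂ i * K i)) ^ (2*H)) ≤
        Real.Gamma (2*H + 1) * (q i + r i * K'^2) /
          (2 * (-((b₁ + ∑ j ∈ univ.erase i, b₂ j * K j) + b₂ i * K')) ^ (2*H)) :=
  stmt_9_general H b₁ b₂ q r K hH hH1 hb₂ hq hr hfix
end

section
/- Let H ∈ (1/2, 1), r > 0, ε > 0 and a > 0, and define Π(η) = Γ(2H+1)·(η - (r/2)·η²) / (2·((a + η)/ε)^{2H}) for η in {η ∈ ℝ : a + η > 0}. Then the function Π attains a global maximum at the unique point η* = (-(r a + 2H - 1) + √((r a + 2H - 1)² + 4(1-H)·r·a)) / (2·(1-H)·r), and η* > 0; moreover η* is the unique root in (0, ∞) of the quadratic (1-H)·r·η² + (r a + 2H - 1)·η - a = 0. -/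
/-!
Up to the positive factor `Γ(2H+1) ε^{2H} / 2` the payoff is
`g(η) = (η - r η² / 2) (a + η)^{-2H}`, and `g'(η) = -q(η) (a + η)^{-2H-1}` with
`q(η) = (1-H) r η² + (r a + 2H - 1) η - a`. As `q(-a) < 0`, the point `-a` lies between the
roots of `q`, so on `(-a, ∞)` the function `g` increases up to the larger root `η*` and
decreases after it. The smaller root is negative since `q(0) < 0`, so `η*` is the only
positive root.
-/

open Set

section Quadratic

variable {A b c : ℝ}

/-- The larger root of `A x² + b x - c` when `0 < A`; `lowerRoot` is the smaller one. -/
noncomputable def upperRoot (A b c : ℝ) : ℝ := (-b + √(b ^ 2 + 4 * A * c)) / (2 * A)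

noncomputable def lowerRoot (A b c : ℝ) : ℝ := (-b - √(b ^ 2 + 4 * A * c)) / (2 * A)

theorem quadratic_eq_mul_sub_upperRoot_mul_sub_lowerRoot (hA : A ≠ 0)
    (hD : 0 ≤ b ^ 2 + 4 * A * c) (x : ℝ) :
    A * x ^ 2 + b * x - c = A * (x - upperRoot A b c) * (x - lowerRoot A b c) := by
  unfold upperRoot lowerRoot
  have hs := Real.sq_sqrt hD
  generalize √(b ^ 2 + 4 * A * c) = s at hs ⊢
  field_simp
  linear_combination hs

theorem lowerRoot_le_upperRoot (hA : 0 < A) : lowerRoot A b c ≤ upperRoot A b c := by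
  unfold upperRoot lowerRoot
  gcongr
  linarith [Real.sqrt_nonneg (b ^ 2 + 4 * A * c)]

theorem discrim_pos (hA : 0 < A) (hc : 0 < c) : 0 < b ^ 2 + 4 * A * c := by
  nlinarith [sq_nonneg b, mul_pos hA hc]

theorem abs_lt_sqrt_discrim (hA : 0 < A) (hc : 0 < c) : |b| < √(b ^ 2 + 4 * A * c) := by
  rw [← Real.sqrt_sq_eq_abs]
  exact Real.sqrt_lt_sqrt (sq_nonneg b) (by linarith [mul_pos hA hc])

theorem upperRoot_pos (hA : 0 < A) (hc : 0 < c) : 0 < upperRoot A b c :=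
  div_pos (by linarith [le_abs_self b, abs_lt_sqrt_discrim (b := b) hA hc]) (by positivity)

theorem lowerRoot_neg (hA : 0 < A) (hc : 0 < c) : lowerRoot A b c < 0 :=
  div_neg_of_neg_of_pos (by linarith [neg_abs_le b, abs_lt_sqrt_discrim (b := b) hA hc])
    (by positivity)

theorem upperRoot_isRoot (hA : 0 < A) (hc : 0 < c) :
    A * upperRoot A b c ^ 2 + b * upperRoot A b c - c = 0 := by
  rw [quadratic_eq_mul_sub_upperRoot_mul_sub_lowerRoot hA.ne' (discrim_pos hA hc).le]
  ring

theorem eq_upperRoot_of_pos (hA : 0 < A) (hc : 0 < c) {x : ℝ} (hx : 0 < x)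
    (hroot : A * x ^ 2 + b * x - c = 0) : x = upperRoot A b c := by
  rw [quadratic_eq_mul_sub_upperRoot_mul_sub_lowerRoot hA.ne' (discrim_pos hA hc).le] at hroot
  rcases mul_eq_zero.1 hroot with h | h
  · exact sub_eq_zero.1 ((mul_eq_zero.1 h).resolve_left hA.ne')
  · linarith [lowerRoot_neg (b := b) hA hc]

theorem lowerRoot_lt_of_quadratic_neg (hA : 0 < A) (hD : 0 ≤ b ^ 2 + 4 * A * c) {x : ℝ}
    (hx : A * x ^ 2 + b * x - c < 0) : lowerRoot A b c < x := by
  rw [quadratic_eq_mul_sub_upperRoot_mul_sub_lowerRoot hA.ne' hD] at hx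
  by_contra! h
  have := lowerRoot_le_upperRoot (b := b) (c := c) hA
  nlinarith [mul_nonneg (sub_nonneg.2 h) (sub_nonneg.2 (h.trans this))]

theorem quadratic_neg_of_mem_Ioo (hA : 0 < A) (hD : 0 ≤ b ^ 2 + 4 * A * c) {x : ℝ}
    (hx : x ∈ Ioo (lowerRoot A b c) (upperRoot A b c)) : A * x ^ 2 + b * x - c < 0 := by
  rw [quadratic_eq_mul_sub_upperRoot_mul_sub_lowerRoot hA.ne' hD]
  exact mul_neg_of_neg_of_pos (mul_neg_of_pos_of_neg hA (by linarith [hx.2]))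
    (by linarith [hx.1])

theorem quadratic_pos_of_upperRoot_lt (hA : 0 < A) (hD : 0 ≤ b ^ 2 + 4 * A * c) {x : ℝ}
    (hx : upperRoot A b c < x) : 0 < A * x ^ 2 + b * x - c := by
  rw [quadratic_eq_mul_sub_upperRoot_mul_sub_lowerRoot hA.ne' hD]
  have := lowerRoot_le_upperRoot (b := b) (c := c) hA
  exact mul_pos (mul_pos hA (by linarith)) (by linarith)

end Quadratic

theorem lt_of_hasDerivAt_of_pos_of_neg {f f' : ℝ → ℝ} {x₀ c : ℝ} (hc : x₀ < c)
    (hf : ∀ y, x₀ < y → HasDerivAt f (f' y) y) (hpos : ∀ y ∈ Ioo x₀ c, 0 < f' y)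
    (hneg : ∀ y, c < y → f' y < 0) {x : ℝ} (hx : x₀ < x) (hxc : x ≠ c) : f x < f c := by
  have hcont : ContinuousOn f (Ioi x₀) := fun y hy => (hf y hy).continuousAt.continuousWithinAt
  rcases hxc.lt_or_gt with hlt | hgt
  · have hmono : StrictMonoOn f (Ioc x₀ c) := by
      refine strictMonoOn_of_hasDerivWithinAt_pos (convex_Ioc x₀ c)
        (hcont.mono Ioc_subset_Ioi_self) (fun y hy => (hf y ?_).hasDerivWithinAt) ?_
      · rw [interior_Ioc] at hy; exact hy.1
      · rw [interior_Ioc]; exact hpos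
    exact hmono ⟨hx, hlt.le⟩ ⟨hc, le_rfl⟩ hlt
  · have hanti : StrictAntiOn f (Ici c) := by
      refine strictAntiOn_of_hasDerivWithinAt_neg (convex_Ici c)
        (hcont.mono (Ici_subset_Ioi.2 hc)) (fun y hy => (hf y ?_).hasDerivWithinAt) ?_
      · rw [interior_Ici] at hy; exact hc.trans hy
      · rw [interior_Ici]; exact hneg
    exact hanti (mem_Ici.2 le_rfl) hgt.le hgt

noncomputable def reducedPayoff (H r a η : ℝ) : ℝ :=
  (η - r / 2 * η ^ 2) * (a + η) ^ (-(2 * H))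

theorem div_two_mul_div_rpow_eq {x ε : ℝ} (hx : 0 ≤ x) (hε : 0 ≤ ε) (C y p : ℝ) :
    C * y / (2 * (x / ε) ^ p) = C * ε ^ p / 2 * (y * x ^ (-p)) := by
  rw [Real.div_rpow hx hε, Real.rpow_neg hx]
  simp only [div_eq_mul_inv, mul_inv, inv_inv]
  ring

theorem hasDerivAt_reducedPayoff (H r : ℝ) {a η : ℝ} (hη : 0 < a + η) :
    HasDerivAt (reducedPayoff H r a)
      (-((1 - H) * r * η ^ 2 + (r * a + 2 * H - 1) * η - a) * (a + η) ^ (-(2 * H) - 1)) η := by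
  have hpoly : HasDerivAt (fun x : ℝ => x - r / 2 * x ^ 2) (1 - r * η) η := by
    refine ((hasDerivAt_id η).sub ((hasDerivAt_pow 2 η).const_mul (r / 2))).congr_deriv ?_
    norm_num; ring
  have hpow : HasDerivAt (fun x : ℝ => (a + x) ^ (-(2 * H)))
      (-(2 * H) * (a + η) ^ (-(2 * H) - 1)) η := by
    simpa using ((hasDerivAt_id η).const_add a).rpow_const (p := -(2 * H)) (Or.inl hη.ne')
  refine (hpoly.mul hpow).congr_deriv ?_
  rw [show (a + η) ^ (-(2 * H)) = (a + η) ^ (-(2 * H) - 1) * (a + η) by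
    rw [← Real.rpow_add_one hη.ne']; ring_nf]
  ring

theorem reducedPayoff_lt_upperRoot {H r a : ℝ} (hH : 0 < H) (hH1 : H < 1) (hr : 0 < r)
    (ha : 0 < a) {η : ℝ} (hη : 0 < a + η)
    (hne : η ≠ upperRoot ((1 - H) * r) (r * a + 2 * H - 1) a) :
    reducedPayoff H r a η <
      reducedPayoff H r a (upperRoot ((1 - H) * r) (r * a + 2 * H - 1) a) := by
  have hA : 0 < (1 - H) * r := mul_pos (by linarith) hr
  have hD := (discrim_pos (b := r * a + 2 * H - 1) hA ha).le
  have hρ := upperRoot_pos (b := r * a + 2 * H - 1) hA ha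
  -- `-a` lies between the roots because the quadratic equals `-H a (r a + 2)` there.
  have hlow : lowerRoot ((1 - H) * r) (r * a + 2 * H - 1) a < -a :=
    lowerRoot_lt_of_quadratic_neg hA hD (by nlinarith [mul_pos hH ha, mul_pos hr ha])
  refine lt_of_hasDerivAt_of_pos_of_neg (x₀ := -a) (by linarith)
    (fun y hy => hasDerivAt_reducedPayoff H r (by linarith)) (fun y hy => ?_) (fun y hy => ?_)
    (by linarith) hne
  · have : 0 < (a + y) ^ (-(2 * H) - 1) := Real.rpow_pos_of_pos (by linarith [hy.1]) _
    have := quadratic_neg_of_mem_Ioo hA hD ⟨hlow.trans hy.1, hy.2⟩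
    nlinarith
  · have : 0 < (a + y) ^ (-(2 * H) - 1) := Real.rpow_pos_of_pos (by linarith) _
    have := quadratic_pos_of_upperRoot_lt hA hD hy
    nlinarith

/-- Best response of a producer in the Rosenblatt-driven Cournot fluctuation game:
the payoff `Π(η) = Γ(2H+1)·(η - (r/2)η²)/(2·((a+η)/ε)^{2H})` on `{η : a + η > 0}`
attains its global maximum at the unique point
`η* = (-(ra+2H-1) + √((ra+2H-1)² + 4(1-H)ra))/(2(1-H)r)`, which is positive and is the
unique positive root of `(1-H)rη² + (ra+2H-1)η - a = 0`. -/
theorem stmt_10 (H r ε a : ℝ)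
    (hH : 1/2 < H) (hH1 : H < 1) (hr : 0 < r) (hε : 0 < ε) (ha : 0 < a) :
    let P : ℝ → ℝ := fun η =>
      Real.Gamma (2*H + 1) * (η - (r/2) * η^2) / (2 * ((a + η)/ε) ^ (2*H));
    let ηstar : ℝ :=
      (-(r*a + 2*H - 1) + Real.sqrt ((r*a + 2*H - 1)^2 + 4*(1-H)*r*a)) / (2*(1-H)*r);
    a + ηstar > 0 ∧
    (∀ η : ℝ, a + η > 0 → P η ≤ P ηstar) ∧
    (∀ η : ℝ, a + η > 0 → P η = P ηstar → η = ηstar) ∧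
    0 < ηstar ∧
    (1-H) * r * ηstar^2 + (r*a + 2*H - 1) * ηstar - a = 0 ∧
    (∀ η : ℝ, 0 < η → (1-H) * r * η^2 + (r*a + 2*H - 1) * η - a = 0 → η = ηstar) := by
  intro P ηstar
  have hA : 0 < (1 - H) * r := mul_pos (by linarith) hr
  have hstar : ηstar = upperRoot ((1 - H) * r) (r * a + 2 * H - 1) a := by
    simp only [ηstar, upperRoot]; ring_nf
  have hstar_pos : 0 < ηstar := hstar ▸ upperRoot_pos hA ha
  set K := Real.Gamma (2 * H + 1) * ε ^ (2 * H) / 2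
  have hK : 0 < K := by
    have := Real.Gamma_pos_of_pos (show 0 < 2 * H + 1 by linarith)
    have := Real.rpow_pos_of_pos hε (2 * H)
    positivity
  have hP : ∀ η, 0 < a + η → P η = K * reducedPayoff H r a η := fun η hη =>
    div_two_mul_div_rpow_eq hη.le hε.le _ _ _
  have hmax : ∀ η, 0 < a + η → η ≠ ηstar → P η < P ηstar := by
    intro η hη hne
    rw [hP η hη, hP ηstar (by linarith), hstar]
    exact mul_lt_mul_of_pos_left
      (reducedPayoff_lt_upperRoot (by linarith) hH1 hr ha hη (hstar ▸ hne)) hK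
  refine ⟨by linarith, fun η hη => ?_, fun η hη hPη => ?_, hstar_pos,
    hstar ▸ upperRoot_isRoot hA ha,
    fun η hη hroot => hstar ▸ eq_upperRoot_of_pos hA ha hη hroot⟩
  · rcases eq_or_ne η ηstar with rfl | hne
    · exact le_rfl
    · exact (hmax η hη hne).le
  · by_contra hne
    exact (hmax η hη hne).ne hPη
end

section
/- Let (Ω, ℱ, ℙ) be a probability space, let p be a square-integrable real random variable, and let r > 0, r̄ > 0, c ∈ ℝ. For a square-integrable real random variable u define the payoff J(u) = E[p·u] - c·E[u] - (r/2)·E[u²] - (r̄/2)·(E[u])². Then for every square-integrable u, J(u) ≤ Var(p)/(2r) + (E[p] - c)²/(2(r + r̄)), and equality holds if and only if u = (p - E[p])/r + (E[p] - c)/(r + r̄) almost surely. -/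
open MeasureTheory ProbabilityTheory

/-! With `m = E[p]`, completing the square in `Var(u)` against `Cov(p, u)` and in `E[u]` gives
`J(u) = Var(p)/(2r) + (m - c)²/(2(r + r̄))`
`       - (r/2)·Var(u - p/r) - ((r + r̄)/2)·(E[u] - (m - c)/(r + r̄))²`.
Both subtracted terms are nonnegative, and they vanish exactly when `u - p/r` is a.s. constant
with `E[u] = (m - c)/(r + r̄)`, i.e. when `u` is a.s. the stated strategy. -/

section Payoff

variable {Ω : Type*} [MeasurableSpace Ω] (μ : Measure Ω) (p : Ω → ℝ) (r rbar c : ℝ)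

noncomputable def payoff (u : Ω → ℝ) : ℝ :=
  (∫ ω, p ω * u ω ∂μ) - c * (∫ ω, u ω ∂μ) - (r / 2) * (∫ ω, (u ω) ^ 2 ∂μ)
    - (rbar / 2) * (∫ ω, u ω ∂μ) ^ 2

noncomputable def optimalSupply : Ω → ℝ := fun ω =>
  (p ω - ∫ ω', p ω' ∂μ) / r + ((∫ ω', p ω' ∂μ) - c) / (r + rbar)

variable {μ p r rbar c}

lemma memLp_div_const (hp : MemLp p 2 μ) : MemLp (fun ω ↦ p ω / r) 2 μ := by
  simpa only [div_eq_mul_inv] using hp.mul_const r⁻¹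

variable [IsProbabilityMeasure μ]

lemma variance_const (a : ℝ) : Var[fun _ ↦ a; μ] = 0 := by
  simp [variance_eq_integral aemeasurable_const]

lemma payoff_eq_sub_variance_sub_sq (hp : MemLp p 2 μ) (hr : r ≠ 0) (hrr : r + rbar ≠ 0)
    {u : Ω → ℝ} (hu : MemLp u 2 μ) :
    payoff μ p r rbar c u = Var[p; μ] / (2 * r) + (μ[p] - c) ^ 2 / (2 * (r + rbar))
      - r / 2 * Var[fun ω ↦ u ω - p ω / r; μ]
      - (r + rbar) / 2 * (μ[u] - (μ[p] - c) / (r + rbar)) ^ 2 := by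
  have hpu : ∫ ω, p ω * u ω ∂μ = cov[p, u; μ] + μ[p] * μ[u] := by
    rw [covariance_eq_sub hp hu]; simp
  have hu2 : ∫ ω, u ω ^ 2 ∂μ = Var[u; μ] + μ[u] ^ 2 := by
    rw [variance_eq_sub hu]; simp
  have hvar : Var[fun ω ↦ u ω - p ω / r; μ]
      = Var[u; μ] - 2 * cov[p, u; μ] / r + Var[p; μ] / r ^ 2 := by
    rw [variance_fun_sub hu (memLp_div_const hp), covariance_fun_div_right, covariance_comm]
    simp only [div_eq_mul_inv, variance_mul_const]
    ring
  rw [payoff, hpu, hu2, hvar]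
  field_simp
  ring

lemma integral_optimalSupply (hp : Integrable p μ) :
    μ[optimalSupply μ p r rbar c] = (μ[p] - c) / (r + rbar) := by
  simp only [optimalSupply]
  rw [integral_add (by fun_prop) (integrable_const _), integral_div,
    integral_sub hp (integrable_const _)]
  simp

lemma ae_eq_optimalSupply_iff (hp : MemLp p 2 μ) {u : Ω → ℝ} (hu : MemLp u 2 μ) :
    u =ᵐ[μ] optimalSupply μ p r rbar c ↔
      Var[fun ω ↦ u ω - p ω / r; μ] = 0 ∧ μ[u] = (μ[p] - c) / (r + rbar) := by
  have hpi := hp.integrable one_le_two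
  have hui := hu.integrable one_le_two
  constructor
  · intro hopt
    have hconst :
        (fun ω ↦ u ω - p ω / r) =ᵐ[μ] fun _ ↦ (μ[p] - c) / (r + rbar) - μ[p] / r := by
      filter_upwards [hopt] with ω hω
      rw [hω, optimalSupply]
      ring
    refine ⟨by rw [variance_congr hconst, variance_const], ?_⟩
    rw [integral_congr_ae hopt, integral_optimalSupply hpi]
  · rintro ⟨hvar, hmean⟩
    have hconst : ∀ᵐ ω ∂μ, u ω - p ω / r = μ[fun ω ↦ u ω - p ω / r] :=
      ae_eq_integral_of_variance_eq_zero (hu.sub (memLp_div_const hp)) hvar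
    rw [integral_sub hui (hpi.div_const r), integral_div, hmean] at hconst
    filter_upwards [hconst] with ω hω
    rw [optimalSupply]
    linear_combination hω

end Payoff

/-- Best response of a producer in the variance-aware MFTG with random market price `p`:
for every square-integrable supply `u`, the payoff
`E[p·u] - c·E[u] - (r/2)·E[u²] - (r̄/2)·(E[u])²` is at most
`Var(p)/(2r) + (E[p]-c)²/(2(r+r̄))`, with equality iff
`u = (p - E[p])/r + (E[p]-c)/(r+r̄)` almost surely. -/
theorem stmt_14 {Ω : Type*} [MeasurableSpace Ω] (μ : Measure Ω) [IsProbabilityMeasure μ]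
    (p : Ω → ℝ) (hp : MemLp p 2 μ) (r rbar c : ℝ) (hr : 0 < r) (hrbar : 0 < rbar) :
    ∀ u : Ω → ℝ, MemLp u 2 μ →
      ((∫ ω, p ω * u ω ∂μ) - c * (∫ ω, u ω ∂μ) - (r/2) * (∫ ω, (u ω)^2 ∂μ)
          - (rbar/2) * (∫ ω, u ω ∂μ)^2
        ≤ variance p μ / (2*r) + ((∫ ω, p ω ∂μ) - c)^2 / (2*(r + rbar))) ∧
      ((∫ ω, p ω * u ω ∂μ) - c * (∫ ω, u ω ∂μ) - (r/2) * (∫ ω, (u ω)^2 ∂μ)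
          - (rbar/2) * (∫ ω, u ω ∂μ)^2
        = variance p μ / (2*r) + ((∫ ω, p ω ∂μ) - c)^2 / (2*(r + rbar))
        ↔ u =ᵐ[μ] fun ω =>
            (p ω - ∫ ω', p ω' ∂μ) / r + ((∫ ω', p ω' ∂μ) - c) / (r + rbar)) := by
  intro u hu
  change payoff μ p r rbar c u ≤ _ ∧
    (payoff μ p r rbar c u = _ ↔ u =ᵐ[μ] optimalSupply μ p r rbar c)
  have hrr : 0 < r + rbar := add_pos hr hrbar
  rw [payoff_eq_sub_variance_sub_sq hp hr.ne' hrr.ne' hu, ae_eq_optimalSupply_iff hp hu]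
  have hloss_var : 0 ≤ r / 2 * Var[fun ω ↦ u ω - p ω / r; μ] :=
    mul_nonneg (by positivity) (variance_nonneg _ _)
  have hloss_mean : 0 ≤ (r + rbar) / 2 * (μ[u] - (μ[p] - c) / (r + rbar)) ^ 2 := by positivity
  refine ⟨by linarith, ?_⟩
  rw [sub_sub, sub_eq_self, add_eq_zero_iff_of_nonneg hloss_var hloss_mean,
    mul_eq_zero_iff_left (by positivity : r / 2 ≠ 0),
    mul_eq_zero_iff_left (by positivity : (r + rbar) / 2 ≠ 0), sq_eq_zero_iff,
    sub_eq_zero]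
end

section
/- Let (Ω, ℱ, ℙ) be a probability space, let p be a square-integrable real random variable, and let r > 0, r̄ > 0, c ∈ ℝ. Then the payoff of the mean-field-game (price-taking) strategy u = (p - c)/r equals J((p - c)/r) = Var(p)/(2r) + ((r - r̄)/(2r²))·(E[p] - c)², and the gap between the MFTG optimal value and this payoff equals [Var(p)/(2r) + (E[p] - c)²/(2(r + r̄))] - J((p - c)/r) = r̄²·(E[p] - c)²/(2·r²·(r + r̄)), which is nonnegative. -/
open MeasureTheory ProbabilityTheory

/-!
Price-taking makes the first three terms of the payoff collapse pointwise: with `u = (p - c)/r`,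
`p u - c u - (r/2) u² = (p - c)²/(2r)`, whose mean is `(Var p + (E p - c)²)/(2r)`. Only the
mean-field penalty `(r̄/2)(E u)² = r̄ (E p - c)²/(2r²)` is left, and comparing with the optimal
value is then an identity between rational functions of `r` and `r̄`.
-/

section Payoff

variable {Ω : Type*} [MeasurableSpace Ω] {μ : Measure Ω}

lemma integral_sub_const_sq [IsProbabilityMeasure μ] {X : Ω → ℝ} (hX : MemLp X 2 μ) (c : ℝ) :
    ∫ ω, (X ω - c) ^ 2 ∂μ = variance X μ + (μ[X] - c) ^ 2 := by
  have hXc : MemLp (fun ω => X ω - c) 2 μ := hX.sub (memLp_const c)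
  have hmean : ∫ ω, (X ω - c) ∂μ = μ[X] - c := by
    rw [integral_sub (hX.integrable one_le_two) (integrable_const c)]
    simp
  have hvar := variance_eq_sub hXc
  rw [variance_sub_const hX.aestronglyMeasurable] at hvar
  simp only [Pi.pow_apply, hmean] at hvar
  linarith

noncomputable def producerPayoff (μ : Measure Ω) (p u : Ω → ℝ) (c r rbar : ℝ) : ℝ :=
  (∫ ω, p ω * u ω ∂μ) - c * (∫ ω, u ω ∂μ) - (r / 2) * (∫ ω, u ω ^ 2 ∂μ)
    - (rbar / 2) * (∫ ω, u ω ∂μ) ^ 2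

lemma producerPayoff_eq_integral [IsFiniteMeasure μ] {p u : Ω → ℝ} (hp : MemLp p 2 μ)
    (hu : MemLp u 2 μ) (c r rbar : ℝ) :
    producerPayoff μ p u c r rbar
      = (∫ ω, (p ω * u ω - c * u ω - (r / 2) * u ω ^ 2) ∂μ)
        - (rbar / 2) * (∫ ω, u ω ∂μ) ^ 2 := by
  have hu1 : Integrable u μ := hu.integrable one_le_two
  have hpu : Integrable (fun ω => p ω * u ω) μ := hp.integrable_mul hu
  have hu2 : Integrable (fun ω => u ω ^ 2) μ := hu.integrable_sq
  have hlin : Integrable (fun ω => p ω * u ω - c * u ω) μ := hpu.sub (hu1.const_mul c)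
  rw [producerPayoff, integral_sub hlin (hu2.const_mul _), integral_sub hpu (hu1.const_mul c),
    integral_const_mul, integral_const_mul]

lemma producerPayoff_priceTaking [IsProbabilityMeasure μ] {p : Ω → ℝ} (hp : MemLp p 2 μ)
    (c : ℝ) {r : ℝ} (hr : r ≠ 0) (rbar : ℝ) :
    producerPayoff μ p (fun ω => (p ω - c) / r) c r rbar
      = variance p μ / (2 * r) + ((r - rbar) / (2 * r ^ 2)) * (μ[p] - c) ^ 2 := by
  have hpc : MemLp (fun ω => p ω - c) 2 μ := hp.sub (memLp_const c)
  have hu : MemLp (fun ω => (p ω - c) / r) 2 μ := by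
    simpa only [div_eq_mul_inv] using hpc.mul_const r⁻¹
  have hcollapse : ∀ ω, p ω * ((p ω - c) / r) - c * ((p ω - c) / r)
      - (r / 2) * ((p ω - c) / r) ^ 2 = (p ω - c) ^ 2 / (2 * r) := by
    intro ω
    field_simp
    ring
  have hmean : ∫ ω, (p ω - c) / r ∂μ = (μ[p] - c) / r := by
    rw [integral_div, integral_sub (hp.integrable one_le_two) (integrable_const c)]
    simp
  rw [producerPayoff_eq_integral hp hu, hmean]
  simp only [hcollapse]
  rw [integral_div, integral_sub_const_sq hp]
  field_simp
  ring

end Payoff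

lemma priceTaking_gap {r rbar : ℝ} (hr : r ≠ 0) (hrr : r + rbar ≠ 0) (V d : ℝ) :
    (V / (2 * r) + d ^ 2 / (2 * (r + rbar))) - (V / (2 * r) + ((r - rbar) / (2 * r ^ 2)) * d ^ 2)
      = rbar ^ 2 * d ^ 2 / (2 * r ^ 2 * (r + rbar)) := by
  field_simp
  ring

/-- Price of simplicity: the payoff of the price-taking (frozen mean-field) strategy
`u = (p - c)/r` equals `Var(p)/(2r) + ((r - r̄)/(2r²))·(E[p]-c)²`, and its shortfall
from the MFTG optimal value `Var(p)/(2r) + (E[p]-c)²/(2(r+r̄))` equals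
`r̄²·(E[p]-c)²/(2r²(r+r̄))`, which is nonnegative. -/
theorem stmt_16 {Ω : Type*} [MeasurableSpace Ω] (μ : Measure Ω) [IsProbabilityMeasure μ]
    (p : Ω → ℝ) (hp : MemLp p 2 μ) (r rbar c : ℝ) (hr : 0 < r) (hrbar : 0 < rbar) :
    let u : Ω → ℝ := fun ω => (p ω - c) / r;
    let J : ℝ := (∫ ω, p ω * u ω ∂μ) - c * (∫ ω, u ω ∂μ) - (r/2) * (∫ ω, (u ω)^2 ∂μ)
        - (rbar/2) * (∫ ω, u ω ∂μ)^2;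
    J = variance p μ / (2*r) + ((r - rbar)/(2*r^2)) * ((∫ ω, p ω ∂μ) - c)^2 ∧
    (variance p μ / (2*r) + ((∫ ω, p ω ∂μ) - c)^2 / (2*(r + rbar))) - J
      = rbar^2 * ((∫ ω, p ω ∂μ) - c)^2 / (2 * r^2 * (r + rbar)) ∧
    0 ≤ (variance p μ / (2*r) + ((∫ ω, p ω ∂μ) - c)^2 / (2*(r + rbar))) - J := by
  intro u J
  have hJ : J = variance p μ / (2*r) + ((r - rbar)/(2*r^2)) * ((∫ ω, p ω ∂μ) - c)^2 :=
    producerPayoff_priceTaking hp c hr.ne' rbar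
  have hgap := priceTaking_gap hr.ne' (by positivity : r + rbar ≠ 0) (variance p μ)
    ((∫ ω, p ω ∂μ) - c)
  rw [← hJ] at hgap
  exact ⟨hJ, hgap, hgap ▸ by positivity⟩
end
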